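/- arXiv:math/0505252 — 2 statements merged into one kernel-verified Lean document; each statement's English description precedes it below -/
import Mathlib

section
/- The 4-dimensional representation over K given by the matrices T₁ with rows [p(q²−1)/((1+p)q), −(p−1)(q²−1)/((1+p)q), 1, −p(q²−1)²/((1+p)²q²)], [0, p(q²−1)/((1+p)q), 0, (p+q²)(1+pq²)/((1+p)²q²)], [(p+q²)(1+pq²)/((1+p)²q²), (1−p+p²)(q²−1)²/((1+p)²q²), (q²−1)/((1+p)q), (p−1)(q²−1)(p+q²)(1+pq²)/((1+p)³q³)], [0, 1, 0, (q²−1)/((1+p)q)]; T₂ with rows [0,1,0,0], [1,(p²−1)/p,0,0], [0,0,p,0], [0,0,0,p]; X₁ with rows [p,0,0,0], [0,p,0,0], [0,0,−1,−(p−1)(p+q²)(1+pq²)/(p(1+p)q²)], [0,0,0,−1]; X₂ with rows [−1,−(p²−1)/p,0,0], [0,−1,0,0], [0,0,p,0], [0,0,0,p] is irreducible: every K-subspace of K⁴ invariant under all four matrices is 0 or K⁴. -/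
set_option maxHeartbeats 2000000
set_option synthInstance.maxHeartbeats 400000

noncomputable section

/-- `K = ℂ(p,q)`, the field of rational functions in two indeterminates over `ℂ`. -/
abbrev K : Type := FractionRing (MvPolynomial (Fin 2) ℂ)

/-- The indeterminate `p ∈ K`. -/
def pp : K := algebraMap (MvPolynomial (Fin 2) ℂ) K (MvPolynomial.X 0)

/-- The indeterminate `q ∈ K`. -/
def qq : K := algebraMap (MvPolynomial (Fin 2) ℂ) K (MvPolynomial.X 1)

/-- A quadruple of `n × n` matrices over `K` satisfies the `B₂` affine Hecke relations
(with parameters `p`, `q`). -/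
def HeckeRel {n : ℕ} (p q : K) (T₁ T₂ X₁ X₂ : Matrix (Fin n) (Fin n) K) : Prop :=
  IsUnit X₁ ∧ IsUnit X₂ ∧
  (T₁ - q • 1) * (T₁ + q⁻¹ • 1) = 0 ∧
  (T₂ - p • 1) * (T₂ + p⁻¹ • 1) = 0 ∧
  T₁ * T₂ * T₁ * T₂ = T₂ * T₁ * T₂ * T₁ ∧
  T₁ * X₂ * T₁ = X₁ ∧
  T₂ * X₂⁻¹ * T₂ = X₂ ∧
  T₂ * X₁ = X₁ * T₂ ∧
  X₁ * X₂ = X₂ * X₁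

/-- Irreducibility: the only `K`-subspaces of `Kⁿ` invariant under all four matrices
are `0` and `Kⁿ`. -/
def IsIrredRep {n : ℕ} (T₁ T₂ X₁ X₂ : Matrix (Fin n) (Fin n) K) : Prop :=
  ∀ U : Submodule K (Fin n → K),
    (∀ v ∈ U, T₁.mulVec v ∈ U) → (∀ v ∈ U, T₂.mulVec v ∈ U) →
    (∀ v ∈ U, X₁.mulVec v ∈ U) → (∀ v ∈ U, X₂.mulVec v ∈ U) →
    U = ⊥ ∨ U = ⊤

/-- The matrix `T₁` of the representation `Ind ρ₁^{d⁽⁵⁾}`. -/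
def T1d5 : Matrix (Fin 4) (Fin 4) K :=
  !![pp * (qq ^ 2 - 1) / ((1 + pp) * qq), -((pp - 1) * (qq ^ 2 - 1)) / ((1 + pp) * qq), 1,
       -(pp * (qq ^ 2 - 1) ^ 2) / ((1 + pp) ^ 2 * qq ^ 2);
     0, pp * (qq ^ 2 - 1) / ((1 + pp) * qq), 0,
       (pp + qq ^ 2) * (1 + pp * qq ^ 2) / ((1 + pp) ^ 2 * qq ^ 2);
     (pp + qq ^ 2) * (1 + pp * qq ^ 2) / ((1 + pp) ^ 2 * qq ^ 2),
       (1 - pp + pp ^ 2) * (qq ^ 2 - 1) ^ 2 / ((1 + pp) ^ 2 * qq ^ 2),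
       (qq ^ 2 - 1) / ((1 + pp) * qq),
       (pp - 1) * (qq ^ 2 - 1) * (pp + qq ^ 2) * (1 + pp * qq ^ 2) / ((1 + pp) ^ 3 * qq ^ 3);
     0, 1, 0, (qq ^ 2 - 1) / ((1 + pp) * qq)]

/-- The matrix `T₂` of the representation `Ind ρ₁^{d⁽⁵⁾}`. -/
def T2d5 : Matrix (Fin 4) (Fin 4) K :=
  !![0, 1, 0, 0;
     1, (pp ^ 2 - 1) / pp, 0, 0;
     0, 0, pp, 0;
     0, 0, 0, pp]

/-- The matrix `X₁` of the representation `Ind ρ₁^{d⁽⁵⁾}`. -/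
def X1d5 : Matrix (Fin 4) (Fin 4) K :=
  !![pp, 0, 0, 0;
     0, pp, 0, 0;
     0, 0, -1, -((pp - 1) * (pp + qq ^ 2) * (1 + pp * qq ^ 2)) / (pp * (1 + pp) * qq ^ 2);
     0, 0, 0, -1]

/-- The matrix `X₂` of the representation `Ind ρ₁^{d⁽⁵⁾}`. -/
def X2d5 : Matrix (Fin 4) (Fin 4) K :=
  !![-1, -((pp ^ 2 - 1) / pp), 0, 0;
     0, -1, 0, 0;
     0, 0, pp, 0;
     0, 0, 0, pp]

open MvPolynomial in
lemma algMap_ne_zero (f : MvPolynomial (Fin 2) ℂ) (h : eval (fun _ => (2:ℂ)) f ≠ 0) :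
    algebraMap (MvPolynomial (Fin 2) ℂ) K f ≠ 0 := by
  rw [Ne, IsFractionRing.to_map_eq_zero_iff]
  rintro rfl; simp at h

open MvPolynomial in
lemma hp0 : pp ≠ 0 := by
  have := algMap_ne_zero (X 0) (by simp)
  simpa [pp] using this
open MvPolynomial in
lemma hq0 : qq ≠ 0 := by
  have := algMap_ne_zero (X 1) (by simp)
  simpa [qq] using this
open MvPolynomial in
lemma h1p : (1:K) + pp ≠ 0 := by
  have := algMap_ne_zero (1 + X 0) (by simp; norm_num)
  simpa [pp, map_add, map_one] using this
open MvPolynomial in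
lemma hpm1 : pp - 1 ≠ 0 := by
  have := algMap_ne_zero (X 0 - 1) (by simp; norm_num)
  simpa [pp, map_sub, map_one] using this
open MvPolynomial in
lemma hp21 : pp ^ 2 - 1 ≠ 0 := by
  have := algMap_ne_zero (X 0 ^ 2 - 1) (by simp; norm_num)
  simpa [pp, map_sub, map_one, map_pow] using this
open MvPolynomial in
lemma hpq2 : pp + qq ^ 2 ≠ 0 := by
  have := algMap_ne_zero (X 0 + X 1 ^ 2) (by simp; norm_num)
  simpa [pp, qq, map_add, map_pow] using this
open MvPolynomial in
lemma h1pq2 : (1:K) + pp * qq ^ 2 ≠ 0 := by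
  have := algMap_ne_zero (1 + X 0 * X 1 ^ 2) (by simp; norm_num)
  simpa [pp, qq, map_add, map_one, map_mul, map_pow] using this
lemma h4 : (4:K) ≠ 0 := by norm_num

-- mulVec formulas
lemma X2_mulVec (a b c d : K) :
    X2d5.mulVec ![a,b,c,d] = ![-a - (pp^2-1)/pp * b, -b, pp*c, pp*d] := by
  funext i; fin_cases i <;>
    simp [X2d5, Matrix.mulVec, dotProduct, Fin.sum_univ_four] <;> ring
lemma X1_mulVec (a b c d : K) :
    X1d5.mulVec ![a,b,c,d] =
      ![pp*a, pp*b, -c - (pp - 1) * (pp + qq ^ 2) * (1 + pp * qq ^ 2) / (pp * (1 + pp) * qq ^ 2) * d, -d] := by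
  funext i; fin_cases i <;>
    simp [X1d5, Matrix.mulVec, dotProduct, Fin.sum_univ_four] <;> ring
lemma T2_mulVec_e0 : T2d5.mulVec ![(1:K),0,0,0] = ![0,1,0,0] := by
  funext i; fin_cases i <;>
    simp [T2d5, Matrix.mulVec, dotProduct, Fin.sum_univ_four]
lemma T1_mulVec_e0 : T1d5.mulVec ![(1:K),0,0,0] =
    ![pp * (qq ^ 2 - 1) / ((1 + pp) * qq), 0,
      (pp + qq ^ 2) * (1 + pp * qq ^ 2) / ((1 + pp) ^ 2 * qq ^ 2), 0] := by
  funext i; fin_cases i <;>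
    simp [T1d5, Matrix.mulVec, dotProduct, Fin.sum_univ_four]
lemma T1_mulVec_e1 : T1d5.mulVec ![(0:K),1,0,0] =
    ![-((pp - 1) * (qq ^ 2 - 1)) / ((1 + pp) * qq), pp * (qq ^ 2 - 1) / ((1 + pp) * qq),
      (1 - pp + pp ^ 2) * (qq ^ 2 - 1) ^ 2 / ((1 + pp) ^ 2 * qq ^ 2), 1] := by
  funext i; fin_cases i <;>
    simp [T1d5, Matrix.mulVec, dotProduct, Fin.sum_univ_four]
lemma T1_mulVec_e2 : T1d5.mulVec ![(0:K),0,1,0] =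
    ![1, 0, (qq ^ 2 - 1) / ((1 + pp) * qq), 0] := by
  funext i; fin_cases i <;>
    simp [T1d5, Matrix.mulVec, dotProduct, Fin.sum_univ_four]
-- step lemmas
lemma scale_pos0 (U : Submodule K (Fin 4 → K)) (c : K) (hc : c ≠ 0)
    (h : ![c,0,0,0] ∈ U) : ![(1:K),0,0,0] ∈ U := by
  have hv : ![(1:K),0,0,0] = c⁻¹ • ![c,0,0,0] := by
    funext i; fin_cases i <;> simp [inv_mul_cancel₀ hc]
  rw [hv]; exact U.smul_mem _ h

lemma scale_pos2 (U : Submodule K (Fin 4 → K)) (c : K) (hc : c ≠ 0)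
    (h : ![(0:K),0,c,0] ∈ U) : ![(0:K),0,1,0] ∈ U := by
  have hv : ![(0:K),0,1,0] = c⁻¹ • ![(0:K),0,c,0] := by
    funext i; fin_cases i <;> simp [inv_mul_cancel₀ hc]
  rw [hv]; exact U.smul_mem _ h

lemma stepA (U : Submodule K (Fin 4 → K))
    (hX2 : ∀ v ∈ U, X2d5.mulVec v ∈ U) (a b : K)
    (hab : ![a,b,0,0] ∈ U) (h : a ≠ 0 ∨ b ≠ 0) : ![(1:K),0,0,0] ∈ U := by
  by_cases hb : b = 0
  · subst hb
    have ha : a ≠ 0 := h.resolve_right (by simp)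
    exact scale_pos0 U a ha hab
  · have hsum : X2d5.mulVec ![a,b,0,0] + ![a,b,0,0] = ![-((pp^2-1)/pp * b),0,0,0] := by
      rw [X2_mulVec]; funext i; fin_cases i <;> simp <;> ring
    have hm : ![-((pp^2-1)/pp * b),0,0,0] ∈ U := by
      rw [← hsum]; exact U.add_mem (hX2 _ hab) hab
    exact scale_pos0 U _ (neg_ne_zero.mpr (mul_ne_zero (div_ne_zero hp21 hp0) hb)) hm

lemma stepC (U : Submodule K (Fin 4 → K))
    (hT1 : ∀ v ∈ U, T1d5.mulVec v ∈ U)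
    (hX1 : ∀ v ∈ U, X1d5.mulVec v ∈ U) (c d : K)
    (hcd : ![(0:K),0,c,d] ∈ U) (h : c ≠ 0 ∨ d ≠ 0) : ![(1:K),0,0,0] ∈ U := by
  have he2 : ![(0:K),0,1,0] ∈ U := by
    by_cases hd : d = 0
    · subst hd
      exact scale_pos2 U c (h.resolve_right (by simp)) hcd
    · have hsum : X1d5.mulVec ![(0:K),0,c,d] + ![(0:K),0,c,d] =
          ![(0:K),0,-((pp - 1) * (pp + qq ^ 2) * (1 + pp * qq ^ 2) / (pp * (1 + pp) * qq ^ 2) * d),0] := by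
        rw [X1_mulVec]; funext i; fin_cases i <;> simp <;> ring
      have hm := U.add_mem (hX1 _ hcd) hcd
      rw [hsum] at hm
      refine scale_pos2 U _ (neg_ne_zero.mpr (mul_ne_zero ?_ hd)) hm
      exact div_ne_zero (mul_ne_zero (mul_ne_zero hpm1 hpq2) h1pq2)
        (mul_ne_zero (mul_ne_zero hp0 h1p) (pow_ne_zero _ hq0))
  -- e0 = T1 e2 - γ • e2
  have hid : ![(1:K),0,0,0] =
      T1d5.mulVec ![(0:K),0,1,0] - ((qq ^ 2 - 1) / ((1 + pp) * qq)) • ![(0:K),0,1,0] := by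
    rw [T1_mulVec_e2]; funext i; fin_cases i <;> simp
  rw [hid]; exact U.sub_mem (hT1 _ he2) (U.smul_mem _ he2)

lemma stepB (U : Submodule K (Fin 4 → K))
    (hT1 : ∀ v ∈ U, T1d5.mulVec v ∈ U) (hT2 : ∀ v ∈ U, T2d5.mulVec v ∈ U)
    (he0 : ![(1:K),0,0,0] ∈ U) : U = ⊤ := by
  have he1 : ![(0:K),1,0,0] ∈ U := by
    have h := hT2 _ he0; rwa [T2_mulVec_e0] at h
  have s_ne : (pp + qq ^ 2) * (1 + pp * qq ^ 2) / ((1 + pp) ^ 2 * qq ^ 2) ≠ 0 :=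
    div_ne_zero (mul_ne_zero hpq2 h1pq2)
      (mul_ne_zero (pow_ne_zero _ h1p) (pow_ne_zero _ hq0))
  have he2 : ![(0:K),0,1,0] ∈ U := by
    have hid : ![(0:K),0,(pp + qq ^ 2) * (1 + pp * qq ^ 2) / ((1 + pp) ^ 2 * qq ^ 2),0] =
        T1d5.mulVec ![(1:K),0,0,0] - (pp * (qq ^ 2 - 1) / ((1 + pp) * qq)) • ![(1:K),0,0,0] := by
      rw [T1_mulVec_e0]; funext i; fin_cases i <;> simp
    refine scale_pos2 U _ s_ne ?_
    rw [hid]; exact U.sub_mem (hT1 _ he0) (U.smul_mem _ he0)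
  have he3 : ![(0:K),0,0,1] ∈ U := by
    have hid : ![(0:K),0,0,1] =
        T1d5.mulVec ![(0:K),1,0,0]
          - (-((pp - 1) * (qq ^ 2 - 1)) / ((1 + pp) * qq)) • ![(1:K),0,0,0]
          - (pp * (qq ^ 2 - 1) / ((1 + pp) * qq)) • ![(0:K),1,0,0]
          - ((1 - pp + pp ^ 2) * (qq ^ 2 - 1) ^ 2 / ((1 + pp) ^ 2 * qq ^ 2)) • ![(0:K),0,1,0] := by
      rw [T1_mulVec_e1]; funext i; fin_cases i <;> simp
    rw [hid]
    exact U.sub_mem (U.sub_mem (U.sub_mem (hT1 _ he1) (U.smul_mem _ he0))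
      (U.smul_mem _ he1)) (U.smul_mem _ he2)
  rw [Submodule.eq_top_iff']; intro w
  have hw : w = w 0 • ![(1:K),0,0,0] + w 1 • ![(0:K),1,0,0]
      + w 2 • ![(0:K),0,1,0] + w 3 • ![(0:K),0,0,1] := by
    funext i; fin_cases i <;> simp
  rw [hw]
  exact U.add_mem (U.add_mem (U.add_mem (U.smul_mem _ he0) (U.smul_mem _ he1))
    (U.smul_mem _ he2)) (U.smul_mem _ he3)

lemma projf (U : Submodule K (Fin 4 → K))
    (hX1 : ∀ v ∈ U, X1d5.mulVec v ∈ U) (hX2 : ∀ v ∈ U, X2d5.mulVec v ∈ U)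
    (a b c d : K) (hv : ![a,b,c,d] ∈ U) :
    ![2*(1+pp)*a + (pp^2-1)/pp * b, 2*(1+pp)*b,
      -((pp - 1) * (pp + qq ^ 2) * (1 + pp * qq ^ 2) / (pp * (1 + pp) * qq ^ 2) * d), 0] ∈ U := by
  have hsum : X1d5.mulVec ![a,b,c,d] - X2d5.mulVec ![a,b,c,d] + (1+pp) • ![a,b,c,d] =
      ![2*(1+pp)*a + (pp^2-1)/pp * b, 2*(1+pp)*b,
        -((pp - 1) * (pp + qq ^ 2) * (1 + pp * qq ^ 2) / (pp * (1 + pp) * qq ^ 2) * d), 0] := by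
    rw [X1_mulVec, X2_mulVec]; funext i; fin_cases i <;> simp <;> ring
  rw [← hsum]
  exact U.add_mem (U.sub_mem (hX1 _ hv) (hX2 _ hv)) (U.smul_mem _ hv)

lemma d5_main : ∀ U : Submodule K (Fin 4 → K),
    (∀ v ∈ U, T1d5.mulVec v ∈ U) → (∀ v ∈ U, T2d5.mulVec v ∈ U) →
    (∀ v ∈ U, X1d5.mulVec v ∈ U) → (∀ v ∈ U, X2d5.mulVec v ∈ U) →
    U = ⊥ ∨ U = ⊤ := by
  intro U hT1 hT2 hX1 hX2
  by_cases hbot : U = ⊥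
  · exact Or.inl hbot
  right
  obtain ⟨v, hvU, hv0⟩ := Submodule.ne_bot_iff U |>.mp hbot
  obtain ⟨a, b, c, d, rfl⟩ : ∃ a b c d, v = ![a,b,c,d] :=
    ⟨v 0, v 1, v 2, v 3, by funext i; fin_cases i <;> simp⟩
  refine stepB U hT1 hT2 ?_
  by_cases hab : a = 0 ∧ b = 0
  · obtain ⟨rfl, rfl⟩ := hab
    refine stepC U hT1 hX1 c d hvU ?_
    by_contra h
    push_neg at h
    obtain ⟨rfl, rfl⟩ := h
    exact hv0 (by funext i; fin_cases i <;> simp)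
  · have h1 := projf U hX1 hX2 a b c d hvU
    have h2 := projf U hX1 hX2 _ _ _ _ h1
    simp only [mul_zero, neg_zero] at h2
    refine stepA U hX2 _ _ h2 ?_
    have h2p : (2:K) * (1 + pp) ≠ 0 := mul_ne_zero two_ne_zero h1p
    by_cases hb : b = 0
    · subst hb
      have ha : a ≠ 0 := fun h => hab ⟨h, rfl⟩
      left
      simp only [mul_zero, add_zero]
      exact mul_ne_zero h2p (mul_ne_zero h2p ha)
    · right
      exact mul_ne_zero h2p (mul_ne_zero h2p hb)


/-- The 4-dimensional representation `Ind_{Ĥ₂}^{Ĥ} ρ₁^{d⁽⁵⁾}` is irreducible. -/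
theorem d5_irreducible : IsIrredRep T1d5 T2d5 X1d5 X2d5 := d5_main
end
end

section
/- The following 3×3 matrices over F satisfy the B₂ affine Hecke relations with p = q and give an irreducible representation (every invariant F-subspace of F³ is 0 or F³): X₁ with rows [q⁻¹, 0, −(q²−1)/q³], [0, q⁻¹, 0], [0, 0, q⁻¹]; X₂ with rows [q⁻¹, 0, (q²−1)/q³], [0, q, (q²−1)(q²+2)/q], [0, 0, q⁻¹]; T₁ with rows [q, 0, 0], [q(2+q²), −q⁻¹, 0], [−q, 0, −q⁻¹]; T₂ with rows [−q⁻¹, q⁻¹, q], [0, q, q(q²+1)], [0, 0, −q⁻¹]. (This is the 3-dimensional non-calibrated composition factor U_b² of Ind_{Ĥ₁}^{Ĥ} ρ₂ᵇ in the equal-parameter case p = q.) -/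
set_option maxHeartbeats 2000000
set_option synthInstance.maxHeartbeats 400000

noncomputable section

/-- `F = ℂ(q)`, the field of rational functions in one indeterminate over `ℂ`. -/
abbrev F : Type := RatFunc ℂ

/-- The indeterminate `q ∈ F`. -/
def qF : F := RatFunc.X

/-- The imaginary unit `i`, viewed as a constant in `F`. -/
def ii : F := RatFunc.C Complex.I

/-- A quadruple of `n × n` matrices over `F` satisfies the `B₂` affine Hecke relations
(with parameters `p`, `q`). -/
def HeckeRelF {n : ℕ} (p q : F) (T₁ T₂ X₁ X₂ : Matrix (Fin n) (Fin n) F) : Prop :=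
  IsUnit X₁ ∧ IsUnit X₂ ∧
  (T₁ - q • 1) * (T₁ + q⁻¹ • 1) = 0 ∧
  (T₂ - p • 1) * (T₂ + p⁻¹ • 1) = 0 ∧
  T₁ * T₂ * T₁ * T₂ = T₂ * T₁ * T₂ * T₁ ∧
  T₁ * X₂ * T₁ = X₁ ∧
  T₂ * X₂⁻¹ * T₂ = X₂ ∧
  T₂ * X₁ = X₁ * T₂ ∧
  X₁ * X₂ = X₂ * X₁

/-- Irreducibility: the only `F`-subspaces of `Fⁿ` invariant under all four matrices
are `0` and `Fⁿ`. -/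
def IsIrredRepF {n : ℕ} (T₁ T₂ X₁ X₂ : Matrix (Fin n) (Fin n) F) : Prop :=
  ∀ U : Submodule F (Fin n → F),
    (∀ v ∈ U, T₁.mulVec v ∈ U) → (∀ v ∈ U, T₂.mulVec v ∈ U) →
    (∀ v ∈ U, X₁.mulVec v ∈ U) → (∀ v ∈ U, X₂.mulVec v ∈ U) →
    U = ⊥ ∨ U = ⊤

/-- `X₁` of `U_b²` at `p = q`. -/
def X1b2q : Matrix (Fin 3) (Fin 3) F :=
  !![qF⁻¹, 0, -(qF ^ 2 - 1) / qF ^ 3; 0, qF⁻¹, 0; 0, 0, qF⁻¹]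

/-- `X₂` of `U_b²` at `p = q`. -/
def X2b2q : Matrix (Fin 3) (Fin 3) F :=
  !![qF⁻¹, 0, (qF ^ 2 - 1) / qF ^ 3;
     0, qF, (qF ^ 2 - 1) * (qF ^ 2 + 2) / qF;
     0, 0, qF⁻¹]

/-- `T₁` of `U_b²` at `p = q`. -/
def T1b2q : Matrix (Fin 3) (Fin 3) F :=
  !![qF, 0, 0; qF * (2 + qF ^ 2), -qF⁻¹, 0; -qF, 0, -qF⁻¹]

/-- `T₂` of `U_b²` at `p = q`. -/
def T2b2q : Matrix (Fin 3) (Fin 3) F :=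
  !![-qF⁻¹, qF⁻¹, qF; 0, qF, qF * (qF ^ 2 + 1); 0, 0, -qF⁻¹]

instance : CharZero F :=
  charZero_of_injective_algebraMap (algebraMap ℂ F).injective

lemma hqF : qF ≠ 0 := RatFunc.X_ne_zero

lemma hq2 : qF ^ 2 - 1 ≠ 0 := by
  have h : (Polynomial.X ^ 2 - 1 : Polynomial ℂ) ≠ 0 := by
    intro h
    have := congrArg (Polynomial.eval 2) h
    norm_num at this
  have h2 : algebraMap (Polynomial ℂ) F (Polynomial.X ^ 2 - 1) = qF ^ 2 - 1 := by
    rw [map_sub, map_pow, map_one, RatFunc.algebraMap_X]; rfl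
  rw [← h2]
  exact RatFunc.algebraMap_ne_zero h

lemma hq21 : qF ^ 2 + 1 ≠ 0 := by
  have h : (Polynomial.X ^ 2 + 1 : Polynomial ℂ) ≠ 0 := by
    intro h
    have := congrArg (Polynomial.eval 2) h
    norm_num at this
  have h2 : algebraMap (Polynomial ℂ) F (Polynomial.X ^ 2 + 1) = qF ^ 2 + 1 := by
    rw [map_add, map_pow, map_one, RatFunc.algebraMap_X]; rfl
  rw [← h2]
  exact RatFunc.algebraMap_ne_zero h

/-- explicit inverse of `X₂`. -/
def X2inv : Matrix (Fin 3) (Fin 3) F :=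
  !![qF, 0, -(qF ^ 2 - 1) / qF;
     0, qF⁻¹, -(qF ^ 2 - 1) * (qF ^ 2 + 2) / qF;
     0, 0, qF]

lemma X2_mul_inv : X2b2q * X2inv = 1 := by
  have hq := hqF
  ext i j
  fin_cases i <;> fin_cases j <;>
    simp [X2b2q, X2inv, Matrix.mul_apply, Fin.sum_univ_three, Matrix.vecHead, Matrix.vecTail, Matrix.one_apply] <;>
    (try (field_simp; try ring1)) <;> (try ring1) <;> (try tauto) <;>
        (try (rw [div_eq_iff (by field_simp)]; ring1)) <;> (try (left; ring1))

lemma X2inv_eq : X2b2q⁻¹ = X2inv :=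
  Matrix.inv_eq_right_inv X2_mul_inv

lemma e1_mem (U : Submodule F (Fin 3 → F)) (v : Fin 3 → F) (hv : v ∈ U) (hv0 : v 0 ≠ 0)
    (hT1 : ∀ v ∈ U, T1b2q.mulVec v ∈ U) (hT2 : ∀ v ∈ U, T2b2q.mulVec v ∈ U)
    (hX2 : ∀ v ∈ U, X2b2q.mulVec v ∈ U) : U = ⊤ := by
  have hq := hqF
  -- wvec = (v 0)⁻¹ • (T₁ v + q⁻¹ • v)
  set wvec : Fin 3 → F := ![qF + qF⁻¹, qF * (2 + qF ^ 2), -qF] with hwdef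
  have hw : wvec ∈ U := by
    have h : wvec = (v 0)⁻¹ • (T1b2q.mulVec v + qF⁻¹ • v) := by
      funext i
      fin_cases i <;>
        simp [hwdef, T1b2q, Matrix.mulVec, dotProduct, Fin.sum_univ_three, Matrix.vecHead, Matrix.vecTail] <;>
         (try (field_simp; try ring1)) <;> (try ring1) <;> (try tauto) <;>
        (try (rw [div_eq_iff (by field_simp)]; ring1)) <;> (try (left; ring1))
    rw [h]
    exact U.smul_mem _ (U.add_mem (hT1 v hv) (U.smul_mem _ hv))
  -- u = ![1, q²+1, 0] = 2⁻¹ • (T₂ wvec + q⁻¹ • wvec)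
  set u : Fin 3 → F := ![1, qF ^ 2 + 1, 0] with hudef
  have hu : u ∈ U := by
    have h : u = (2 : F)⁻¹ • (T2b2q.mulVec wvec + qF⁻¹ • wvec) := by
      funext i
      fin_cases i <;>
        simp [hudef, hwdef, T2b2q, Matrix.mulVec, dotProduct, Fin.sum_univ_three, Matrix.vecHead, Matrix.vecTail] <;>
         (try (field_simp; try ring1)) <;> (try ring1) <;> (try tauto) <;>
        (try (rw [div_eq_iff (by field_simp)]; ring1)) <;> (try (left; ring1))
    rw [h]
    exact U.smul_mem _ (U.add_mem (hT2 wvec hw) (U.smul_mem _ hw))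
  -- e₁ ∈ U
  have h5 : (-qF + qF ^ 5 : F) ≠ 0 := by
    have h := mul_ne_zero (mul_ne_zero hqF hq2) hq21
    intro h0
    exact h (by rw [show qF * (qF ^ 2 - 1) * (qF ^ 2 + 1) = -qF + qF ^ 5 from by ring, h0])
  set e1 : Fin 3 → F := ![0, 1, 0] with he1def
  have he1 : e1 ∈ U := by
    have hc : ((qF ^ 2 + 1) * (qF ^ 2 - 1) / qF : F) ≠ 0 := by
      apply div_ne_zero (mul_ne_zero hq21 hq2) hq
    have h : e1 = ((qF ^ 2 + 1) * (qF ^ 2 - 1) / qF)⁻¹ •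
        (X2b2q.mulVec u - qF⁻¹ • u) := by
      funext i
      fin_cases i <;>
        simp [he1def, hudef, X2b2q, Matrix.mulVec, dotProduct, Fin.sum_univ_three, Matrix.vecHead, Matrix.vecTail] <;>
         (try (field_simp; try ring1)) <;> (try ring1) <;>
        (try (rw [eq_div_iff (mul_ne_zero hq21 hq2)]; ring1))
    rw [h]
    exact U.smul_mem _ (U.sub_mem (hX2 u hu) (U.smul_mem _ hu))
  -- e₀ ∈ U
  set e0 : Fin 3 → F := ![1, 0, 0] with he0def
  have he0 : e0 ∈ U := by
    have h : e0 = u - (qF ^ 2 + 1) • e1 := by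
      funext i
      fin_cases i <;> simp [he0def, hudef, he1def]
    rw [h]
    exact U.sub_mem hu (U.smul_mem _ he1)
  -- e₂ ∈ U
  set e2 : Fin 3 → F := ![0, 0, 1] with he2def
  have he2 : e2 ∈ U := by
    have h : e2 = (-qF⁻¹) •
        (T1b2q.mulVec e0 - qF • e0 - (qF * (2 + qF ^ 2)) • e1) := by
      funext i
      fin_cases i <;>
        simp [he2def, he0def, he1def, T1b2q, Matrix.mulVec, dotProduct,
          Fin.sum_univ_three, Matrix.vecHead, Matrix.vecTail] <;>
        (try (field_simp; try ring1)) <;> (try ring1) <;> (try tauto) <;>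
        (try (rw [div_eq_iff (by field_simp)]; ring1)) <;> (try (left; ring1))
    rw [h]
    exact U.smul_mem _ (U.sub_mem (U.sub_mem (hT1 e0 he0) (U.smul_mem _ he0))
      (U.smul_mem _ he1))
  -- conclude
  rw [Submodule.eq_top_iff']
  intro x
  have h : x = x 0 • e0 + x 1 • e1 + x 2 • e2 := by
    funext i
    fin_cases i <;> simp [he0def, he1def, he2def]
  rw [h]
  exact U.add_mem (U.add_mem (U.smul_mem _ he0) (U.smul_mem _ he1)) (U.smul_mem _ he2)

/-- `U_b²` at `p = q` satisfies the `B₂` affine Hecke relations and is irreducible. -/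
theorem Ub2q_relations_and_irreducible :
    HeckeRelF qF qF T1b2q T2b2q X1b2q X2b2q ∧ IsIrredRepF T1b2q T2b2q X1b2q X2b2q := by
  have hq := hqF
  constructor
  · refine ⟨?_, ?_, ?_, ?_, ?_, ?_, ?_, ?_, ?_⟩
    · rw [Matrix.isUnit_iff_isUnit_det, isUnit_iff_ne_zero]
      have h : X1b2q.det = qF⁻¹ ^ 3 := by
        simp [X1b2q, Matrix.det_fin_three, Matrix.vecHead, Matrix.vecTail]
        ring
      rw [h]
      exact pow_ne_zero _ (inv_ne_zero hq)
    · rw [Matrix.isUnit_iff_isUnit_det, isUnit_iff_ne_zero]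
      have h : X2b2q.det = qF⁻¹ ^ 2 * qF := by
        simp [X2b2q, Matrix.det_fin_three, Matrix.vecHead, Matrix.vecTail]
        ring
      rw [h]
      exact mul_ne_zero (pow_ne_zero _ (inv_ne_zero hq)) hq
    · ext i j
      fin_cases i <;> fin_cases j <;>
        simp [T1b2q, Matrix.mul_apply, Fin.sum_univ_three, Matrix.vecHead, Matrix.vecTail, Matrix.one_apply] <;>
         (try (field_simp; try ring1)) <;> (try ring1) <;> (try tauto) <;>
        (try (rw [div_eq_iff (by field_simp)]; ring1)) <;> (try (left; ring1))
    · ext i j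
      fin_cases i <;> fin_cases j <;>
        simp [T2b2q, Matrix.mul_apply, Fin.sum_univ_three, Matrix.vecHead, Matrix.vecTail, Matrix.one_apply] <;>
         (try (field_simp; try ring1)) <;> (try ring1) <;> (try tauto) <;>
        (try (rw [div_eq_iff (by field_simp)]; ring1)) <;> (try (left; ring1))
    · ext i j
      fin_cases i <;> fin_cases j <;>
        simp [T1b2q, T2b2q, Matrix.mul_apply, Fin.sum_univ_three, Matrix.vecHead, Matrix.vecTail] <;>
         (try (field_simp; try ring1)) <;> (try ring1) <;> (try tauto) <;>
        (try (rw [div_eq_iff (by field_simp)]; ring1)) <;> (try (left; ring1))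
    · ext i j
      fin_cases i <;> fin_cases j <;>
        simp [T1b2q, X1b2q, X2b2q, Matrix.mul_apply, Fin.sum_univ_three, Matrix.vecHead, Matrix.vecTail] <;>
         (try (field_simp; try ring1)) <;> (try ring1) <;> (try tauto) <;>
        (try (rw [div_eq_iff (by field_simp)]; ring1)) <;> (try (left; ring1))
    · rw [X2inv_eq]
      ext i j
      fin_cases i <;> fin_cases j <;>
        simp [T2b2q, X2inv, X2b2q, Matrix.mul_apply, Fin.sum_univ_three, Matrix.vecHead, Matrix.vecTail] <;>
         (try (field_simp; try ring1)) <;> (try ring1) <;> (try tauto) <;>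
        (try (rw [div_eq_iff (by field_simp)]; ring1)) <;> (try (left; ring1))
    · ext i j
      fin_cases i <;> fin_cases j <;>
        simp [T2b2q, X1b2q, Matrix.mul_apply, Fin.sum_univ_three, Matrix.vecHead, Matrix.vecTail] <;>
         (try (field_simp; try ring1)) <;> (try ring1) <;> (try tauto) <;>
        (try (rw [div_eq_iff (by field_simp)]; ring1)) <;> (try (left; ring1))
    · ext i j
      fin_cases i <;> fin_cases j <;>
        simp [X1b2q, X2b2q, Matrix.mul_apply, Fin.sum_univ_three, Matrix.vecHead, Matrix.vecTail] <;>
         (try (field_simp; try ring1)) <;> (try ring1) <;> (try tauto) <;>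
        (try (rw [div_eq_iff (by field_simp)]; ring1)) <;> (try (left; ring1))
  · intro U hT1 hT2 hX1 hX2
    by_cases hU : U = ⊥
    · exact Or.inl hU
    right
    obtain ⟨v, hv, hv0⟩ := Submodule.exists_mem_ne_zero_of_ne_bot hU
    by_cases h0 : v 0 ≠ 0
    · exact e1_mem U v hv h0 hT1 hT2 hX2
    push_neg at h0
    by_cases hc : v 1 / qF + qF * v 2 ≠ 0
    · -- u = ![1,q²+1,0] is c⁻¹ • (T₂ v + q⁻¹ • v)
      set u : Fin 3 → F := ![1, qF ^ 2 + 1, 0] with hudef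
      have hc' : qF * v 1 + qF ^ 3 * v 2 ≠ 0 := by
        intro h
        apply hc
        have key : v 1 / qF + qF * v 2 = (qF * v 1 + qF ^ 3 * v 2) / qF ^ 2 := by
          field_simp
        rw [key, h, zero_div]
      have hden : v 1 + qF * v 2 * qF ≠ 0 := by
        intro h
        apply hc'
        rw [show qF * v 1 + qF ^ 3 * v 2 = qF * (v 1 + qF * v 2 * qF) from by ring, h,
          mul_zero]
      have hu : u ∈ U := by
        have h : u = (v 1 / qF + qF * v 2)⁻¹ • (T2b2q.mulVec v + qF⁻¹ • v) := by
          funext i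
          fin_cases i <;>
            simp [hudef, T2b2q, Matrix.mulVec, dotProduct, Fin.sum_univ_three, Matrix.vecHead, Matrix.vecTail, h0] <;>
             (try (field_simp; try ring1)) <;> (try ring1) <;>
            (try (rw [eq_div_iff (show v 1 + qF ^ 2 * v 2 ≠ 0 from by rw [show v 1 + qF ^ 2 * v 2 = v 1 + qF * v 2 * qF from by ring]; exact hden)]; ring1))
        rw [h]
        exact U.smul_mem _ (U.add_mem (hT2 v hv) (U.smul_mem _ hv))
      exact e1_mem U u hu (by simp [hudef]) hT1 hT2 hX2
    push_neg at hc
    -- then v 1 = -q² v 2 and v 2 ≠ 0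
    have hv2 : v 2 ≠ 0 := by
      intro h2
      apply hv0
      have h1 : v 1 = 0 := by
        have := hc
        rw [h2] at this
        field_simp at this
        simpa using this
      funext i
      fin_cases i <;> simp [h0, h1, h2]
    have hx0 : (X1b2q.mulVec v) 0 ≠ 0 := by
      have : (X1b2q.mulVec v) 0 = -(qF ^ 2 - 1) / qF ^ 3 * v 2 := by
        simp [X1b2q, Matrix.mulVec, dotProduct, Fin.sum_univ_three, Matrix.vecHead, Matrix.vecTail, h0]
      rw [this]
      exact mul_ne_zero (div_ne_zero (neg_ne_zero.mpr hq2) (pow_ne_zero _ hqF)) hv2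
    exact e1_mem U (X1b2q.mulVec v) (hX1 v hv) hx0 hT1 hT2 hX2
end
end
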